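/- Let κ > 0 and θ = √(cosh κ). Then for all complex x, y with Re x > 0 and Re y > 0, one has (θ + cosh x)(θ + cosh y) + (cosh κ − 1) cosh x cosh y + sinh κ · sinh x sinh y ≠ 0. -/

import Mathlib

/-!
Write `c = cosh κ`, `s = sinh κ`, `p = sinh (x/2) sinh (y/2)` and `q = cosh (x/2) cosh (y/2)`.
Homogenising with `cosh² - sinh² = 1`, the choice `θ² = c` kills the mixed `cosh² sinh²` terms,
so the expression becomes the binary quadratic form `2(c + θ) q² + 4 s p q + 2(c - θ) p²`.
Its discriminant is a square because `s² - (c² - θ²) = c - 1`, so it splits as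
`2/(c - θ) · ((c - θ) p + (s - d) q) ((c - θ) p + (s + d) q)` with `d = √(c - 1)`.
As `1 < θ < c` and `0 ≤ d < s`, both factors have positive coefficients, and such a factor
vanishes only if `tanh (x/2) tanh (y/2)` is a non-positive real; this is impossible because
`tanh` preserves the right half-plane and a product of two points of the right half-plane lies
in the slit plane.
-/

open ComplexConjugate

namespace Complex

theorem re_sinh_mul_conj_cosh (z : ℂ) :
    (sinh z * conj (cosh z)).re = Real.sinh (2 * z.re) / 2 := by
  have h : sinh z * conj (cosh z) = (sinh (z + conj z) + sinh (z - conj z)) / 2 := by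
    rw [← cosh_conj, sinh_add, sinh_sub]; ring
  rw [h, add_conj, sub_conj, sinh_mul_I, ← ofReal_sin, ← ofReal_sinh, div_ofNat_re, add_re,
    ofReal_re, re_ofReal_mul, I_re, mul_zero, add_zero]

theorem cosh_ne_zero_of_re_pos {z : ℂ} (hz : 0 < z.re) : cosh z ≠ 0 := by
  intro h
  have h' := re_sinh_mul_conj_cosh z
  rw [h, map_zero, mul_zero, zero_re] at h'
  have : 0 < Real.sinh (2 * z.re) := Real.sinh_pos_iff.2 (by linarith)
  linarith

theorem re_tanh_pos {z : ℂ} (hz : 0 < z.re) : 0 < (tanh z).re := by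
  have hnum : (sinh z).re * (cosh z).re + (sinh z).im * (cosh z).im =
      Real.sinh (2 * z.re) / 2 := by
    rw [← re_sinh_mul_conj_cosh, mul_re, conj_re, conj_im]; ring
  rw [tanh_eq_sinh_div_cosh, div_re, ← add_div, hnum]
  exact div_pos (half_pos (Real.sinh_pos_iff.2 (by linarith)))
    (normSq_pos.2 (cosh_ne_zero_of_re_pos hz))

theorem mul_mem_slitPlane_of_re_pos {z w : ℂ} (hz : 0 < z.re) (hw : 0 < w.re) :
    z * w ∈ slitPlane := by
  rw [mem_slitPlane_iff, mul_re, mul_im]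
  by_contra! h
  obtain ⟨hre, him⟩ := h
  have : z.re * (z.re * w.re - z.im * w.im) = w.re * (z.re ^ 2 + z.im ^ 2) := by
    linear_combination -z.im * him
  nlinarith [mul_nonpos_of_nonneg_of_nonpos hz.le hre, mul_pos hw (pow_pos hz 2), sq_nonneg z.im]

theorem ofReal_mul_sinh_mul_sinh_add_ofReal_mul_cosh_mul_cosh_ne_zero {α β : ℝ} (hα : 0 < α)
    (hβ : 0 < β) {x y : ℂ} (hx : 0 < x.re) (hy : 0 < y.re) :
    (α : ℂ) * sinh x * sinh y + β * cosh x * cosh y ≠ 0 := by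
  intro h
  have hcx := cosh_ne_zero_of_re_pos hx
  have hcy := cosh_ne_zero_of_re_pos hy
  have hα' : (α : ℂ) ≠ 0 := ofReal_ne_zero.2 hα.ne'
  have htanh : tanh x * tanh y = ((-(β / α) : ℝ) : ℂ) := by
    rw [tanh_eq_sinh_div_cosh, tanh_eq_sinh_div_cosh]
    push_cast
    field_simp
    linear_combination h
  have hmem := mul_mem_slitPlane_of_re_pos (re_tanh_pos hx) (re_tanh_pos hy)
  rw [htanh, ofReal_mem_slitPlane] at hmem
  linarith [div_pos hβ hα]

end Complex

open Complex

theorem two_spin_factorization (κ θ d x y : ℂ) (hθ : θ ^ 2 = cosh κ) (hd : d ^ 2 = cosh κ - 1) :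
    (cosh κ - θ) * ((θ + cosh x) * (θ + cosh y) + (cosh κ - 1) * cosh x * cosh y +
      sinh κ * sinh x * sinh y) =
    2 * ((cosh κ - θ) * sinh (x / 2) * sinh (y / 2) +
        (sinh κ - d) * cosh (x / 2) * cosh (y / 2)) *
      ((cosh κ - θ) * sinh (x / 2) * sinh (y / 2) +
        (sinh κ + d) * cosh (x / 2) * cosh (y / 2)) := by
  obtain ⟨u, rfl⟩ : ∃ u, x = 2 * u := ⟨x / 2, by ring⟩
  obtain ⟨v, rfl⟩ : ∃ v, y = 2 * v := ⟨y / 2, by ring⟩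
  rw [mul_div_cancel_left₀ u two_ne_zero, mul_div_cancel_left₀ v two_ne_zero, cosh_two_mul,
    cosh_two_mul, sinh_two_mul, sinh_two_mul]
  have hu := cosh_sq_sub_sinh_sq u
  have hv := cosh_sq_sub_sinh_sq v
  have hκ := cosh_sq_sub_sinh_sq κ
  linear_combination
    (cosh κ - θ) * (-θ ^ 2 - θ * (cosh v ^ 2 + sinh v ^ 2)) * hu +
    (cosh κ - θ) * (-θ ^ 2 * (cosh u ^ 2 - sinh u ^ 2) - θ * (cosh u ^ 2 + sinh u ^ 2)) * hv +
    ((cosh κ - θ) * (cosh u ^ 2 - sinh u ^ 2) * (cosh v ^ 2 - sinh v ^ 2) -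
      2 * cosh u ^ 2 * cosh v ^ 2) * hθ +
    2 * cosh u ^ 2 * cosh v ^ 2 * (hκ + hd)

/-- Nonvanishing of the two-spin function `(1+θ)² Φ_κ(x,y)` with `θ = √(cosh κ)`
on the product of open right half-planes. -/
theorem stmt_12 (κ : ℝ) (hκ : 0 < κ) (θ : ℝ) (hθ : θ = Real.sqrt (Real.cosh κ))
    (x y : ℂ) (hx : 0 < x.re) (hy : 0 < y.re) :
    ((θ : ℂ) + Complex.cosh x) * ((θ : ℂ) + Complex.cosh y) +
      (Complex.cosh (κ : ℂ) - 1) * Complex.cosh x * Complex.cosh y +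
      Complex.sinh (κ : ℂ) * Complex.sinh x * Complex.sinh y ≠ 0 := by
  have hc : 1 < Real.cosh κ := Real.one_lt_cosh.2 hκ.ne'
  have hθsq : θ ^ 2 = Real.cosh κ := hθ ▸ Real.sq_sqrt (by linarith)
  have hθc : θ < Real.cosh κ := by
    rw [hθ, Real.sqrt_lt' (by linarith)]; nlinarith
  set d := Real.sqrt (Real.cosh κ - 1) with hd
  have hdsq : d ^ 2 = Real.cosh κ - 1 := Real.sq_sqrt (by linarith)
  have hds : d < Real.sinh κ := by
    rw [hd, Real.sqrt_lt' (Real.sinh_pos_iff.2 hκ), Real.sinh_sq]; nlinarith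
  have hx2 : 0 < (x / 2).re := by rw [div_ofNat_re]; positivity
  have hy2 : 0 < (y / 2).re := by rw [div_ofNat_re]; positivity
  have factor_ne (β : ℝ) (hβ : 0 < β) :
      ((Real.cosh κ - θ : ℝ) : ℂ) * sinh (x / 2) * sinh (y / 2) +
        (β : ℂ) * cosh (x / 2) * cosh (y / 2) ≠ 0 :=
    ofReal_mul_sinh_mul_sinh_add_ofReal_mul_cosh_mul_cosh_ne_zero (sub_pos.2 hθc) hβ hx2 hy2
  have h_sub := factor_ne (Real.sinh κ - d) (by linarith)
  have h_add := factor_ne (Real.sinh κ + d) (by positivity)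
  push_cast at h_sub h_add
  have hfac := two_spin_factorization κ θ d x y (by exact_mod_cast hθsq) (by exact_mod_cast hdsq)
  intro h
  rw [h, mul_zero] at hfac
  exact mul_ne_zero (mul_ne_zero two_ne_zero h_sub) h_add hfac.symm
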